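/- Let M ∈ ℂ^{n×n} be invertible, let Λ ∈ ℂ^{n×n} be diagonal, let ε ∈ (0,1), let Λ̄ be the spectrally clipped diagonal matrix obtained from Λ with margin ε, and set Â = M Λ̄ M⁻¹. Then the discrete-time system x_{k+1} = Â x_k is asymptotically stable: for every initial vector x₀ ∈ ℂ^n, the sequence Â^k x₀ converges to 0 as k → ∞. -/

import Mathlib

/- STATEMENT 5: If `M` is invertible, `Λ = diagonal d`, `ε ∈ (0,1)`, `Λ̄` is the spectrally
clipped diagonal matrix obtained from `Λ` with margin `ε`, and `Â = M Λ̄ M⁻¹`, then the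
discrete-time system `x_{k+1} = Â x_k` is asymptotically stable: for every initial vector
`x₀ ∈ ℂ^n`, the sequence `Â^k x₀` converges to `0` as `k → ∞`. -/

open Matrix Filter

/-- The scalar spectral-clipping map with margin `ε`:
`z ↦ (1−ε)·z/|z|` if `|z| ≥ 1`, and `z ↦ z` if `|z| < 1`. -/
noncomputable def clipEntry (ε : ℝ) (z : ℂ) : ℂ :=
  if 1 ≤ ‖z‖ then ((1 - ε : ℝ) : ℂ) * z / (‖z‖ : ℂ) else z

/-! Clipping moves every entry into the open unit disc, so `Λ̄ ^ k → 0` entrywise; conjugating by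
the fixed invertible `M` preserves this limit, since `(M Λ̄ M⁻¹) ^ k = M Λ̄ ^ k M⁻¹`. -/

lemma norm_clipEntry_lt_one {ε : ℝ} (hε0 : 0 < ε) (hε1 : ε < 1) (z : ℂ) :
    ‖clipEntry ε z‖ < 1 := by
  unfold clipEntry
  split_ifs with hz
  · have hz0 : 0 < ‖z‖ := by linarith
    rw [norm_div, norm_mul, Complex.norm_real, Complex.norm_real, Real.norm_of_nonneg (by linarith),
      norm_norm, mul_div_assoc, div_self hz0.ne', mul_one]
    linarith
  · exact not_le.mp hz

lemma tendsto_diagonal_pow_nhds_zero {ι 𝕜 : Type*} [Fintype ι] [DecidableEq ι]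
    [NormedRing 𝕜] [NormOneClass 𝕜] {c : ι → 𝕜} (hc : ∀ i, ‖c i‖ < 1) :
    Tendsto (fun k : ℕ => diagonal c ^ k) atTop (nhds 0) := by
  have hpow : Tendsto (fun k : ℕ => c ^ k) atTop (nhds 0) :=
    tendsto_pi_nhds.mpr fun i => tendsto_pow_atTop_nhds_zero_of_norm_lt_one (hc i)
  simpa only [diagonal_pow, diagonal_zero', id, Function.comp_def] using
    (continuous_id.matrix_diagonal.tendsto 0).comp hpow

lemma tendsto_conj_pow_mulVec_nhds_zero {ι R : Type*} [Fintype ι] [DecidableEq ι] [CommRing R]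
    [TopologicalSpace R] [IsTopologicalRing R] {M A : Matrix ι ι R} (hM : IsUnit M)
    (hA : Tendsto (fun k : ℕ => A ^ k) atTop (nhds 0)) (x : ι → R) :
    Tendsto (fun k : ℕ => (M * A * M⁻¹) ^ k *ᵥ x) atTop (nhds 0) := by
  have hconj (k : ℕ) : (M * A * M⁻¹) ^ k = M * A ^ k * M⁻¹ := by
    rw [← hM.unit_spec, ← coe_units_inv, Units.conj_pow]
  have hcont : Continuous fun B : Matrix ι ι R => (M * B * M⁻¹) *ᵥ x :=
    ((continuous_const.matrix_mul continuous_id).matrix_mul continuous_const).matrix_mulVec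
      continuous_const
  simpa only [hconj, Matrix.mul_zero, Matrix.zero_mul, zero_mulVec, Function.comp_def] using
    (hcont.tendsto 0).comp hA

theorem spectral_clipping_asymptotically_stable_general (n : ℕ)
    (M : Matrix (Fin n) (Fin n) ℂ) (hM : IsUnit M) (d : Fin n → ℂ)
    (ε : ℝ) (hε0 : 0 < ε) (hε1 : ε < 1) (x₀ : Fin n → ℂ) :
    Tendsto
      (fun k : ℕ =>
        ((M * Matrix.diagonal (fun i => clipEntry ε (d i)) * M⁻¹) ^ k) *ᵥ x₀)
      atTop (nhds 0) :=
  tendsto_conj_pow_mulVec_nhds_zero hM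
    (tendsto_diagonal_pow_nhds_zero fun i => norm_clipEntry_lt_one hε0 hε1 (d i)) x₀

theorem spectral_clipping_asymptotically_stable (n : ℕ) (hn : 1 ≤ n)
    (M : Matrix (Fin n) (Fin n) ℂ) (hM : IsUnit M) (d : Fin n → ℂ)
    (ε : ℝ) (hε0 : 0 < ε) (hε1 : ε < 1) (x₀ : Fin n → ℂ) :
    Tendsto
      (fun k : ℕ =>
        ((M * Matrix.diagonal (fun i => clipEntry ε (d i)) * M⁻¹) ^ k) *ᵥ x₀)
      atTop (nhds 0) :=
  spectral_clipping_asymptotically_stable_general n M hM d ε hε0 hε1 x₀
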